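/- arXiv:1909.13752 — 2 statements merged into one kernel-verified Lean document; each statement's English description precedes it below -/
import Mathlib

section
/- Let u be a nonzero linear functional on 𝒫 satisfying D(φu) = ψu with φ(x) = ax² + bx + c of degree at most 2 and ψ(x) = dx + e of degree at most 1, not both zero, and set d_n := d + an, e_n := e + bn. Assume d_n ≠ 0 and φ(−e_n/d_{2n}) ≠ 0 for all n ≥ 0, and let (P_n)_{n≥0} be the monic OPS with respect to u. Then the distributional Rodrigues formula P_n·u = k_n·D^n(φ^n·u) holds in 𝒫* for every n ≥ 0, where k_n := ∏_{j=0}^{n−1} d_{n+j−1}^{−1}. -/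
/-!
Under the Pearson equation `D(φu) = ψu`, Leibniz's rule gives
`D(π φ^(m+1) u) = (π' φ + π (m φ' + ψ)) φ^m u`, so `D^n(φ^n u) = R_n u` for a polynomial `R_n`.
Since `deg φ ≤ 2` and `deg ψ ≤ 1`, each of the `n` steps raises the degree by at most one and
multiplies the top coefficient by some `d_j`, so `deg R_n ≤ n` and the coefficient of `x^n` in
`R_n` is `∏_{j<n} d_{n+j-1} = k_n⁻¹`. On the other hand `⟨D^n v, f⟩ = (-1)^n ⟨v, f^(n)⟩` vanishes
for `deg f < n`, so `R_n` is `u`-orthogonal to every polynomial of lower degree, and regularity of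
`u` forces `R_n = k_n⁻¹ P_n`.
-/

open Polynomial

noncomputable section

namespace HahnOPSPaper

/-- The algebraic dual of the space of complex polynomials. -/
abbrev PDual : Type := Module.Dual ℂ (Polynomial ℂ)

/-- Left multiplication of a functional by a polynomial: `⟨φu, f⟩ = ⟨u, φf⟩`. -/
def pMul (φ : Polynomial ℂ) (u : PDual) : PDual := u ∘ₗ LinearMap.mulLeft ℂ φ

/-- Distributional derivative: `⟨Du, f⟩ = -⟨u, f'⟩`. -/
def dDeriv (u : PDual) : PDual :=
  -(u ∘ₗ (Polynomial.derivative : Polynomial ℂ →ₗ[ℂ] Polynomial ℂ))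

/-- The q-bracket `[n]_q = 1 + q + ⋯ + q^(n-1)`. -/
def qBracket (q : ℂ) (n : ℕ) : ℂ := ∑ i ∈ Finset.range n, q ^ i

/-- q-factorial `[n]_q!`. -/
def qFact (q : ℂ) (n : ℕ) : ℂ := ∏ i ∈ Finset.range n, qBracket q (i + 1)

/-- `D` is Hahn's operator `D_{q,ω}`, i.e. the (unique, for `(q,ω) ≠ (1,0)`) linear operator
with `((q-1)x + ω)·(Df)(x) = f(qx+ω) - f(x)`. -/
def IsHahn (q ω : ℂ) (D : Polynomial ℂ →ₗ[ℂ] Polynomial ℂ) : Prop :=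
  ∀ f : Polynomial ℂ, (C (q - 1) * X + C ω) * D f = f.comp (C q * X + C ω) - f

/-- The operator `(L_{q,ω} f)(x) = f(qx + ω)`. -/
def Lop (q ω : ℂ) : Polynomial ℂ →ₗ[ℂ] Polynomial ℂ :=
  (aeval (C q * X + C ω)).toLinearMap

/-- The distributional Hahn operator `D_{q,ω}` on the dual, built from the ordinary operator
`D*_{q,ω} = D_{1/q,-ω/q}`: `⟨D_{q,ω}u, f⟩ = -q⁻¹·⟨u, D*_{q,ω}f⟩`. -/
def hahnDual (q : ℂ) (Dstar : Polynomial ℂ →ₗ[ℂ] Polynomial ℂ) (u : PDual) : PDual :=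
  (-q⁻¹) • (u ∘ₗ Dstar)

/-- The distributional operator `L_{q,ω}`: `⟨L_{q,ω}u, f⟩ = q⁻¹·⟨u, L_{1/q,-ω/q}f⟩`. -/
def LDual (q ω : ℂ) (u : PDual) : PDual := q⁻¹ • (u ∘ₗ Lop q⁻¹ (-ω / q))

/-- A functional is regular if it admits a monic orthogonal polynomial sequence. -/
def IsRegularFunc (u : PDual) : Prop :=
  ∃ P : ℕ → Polynomial ℂ, (∀ n, (P n).Monic ∧ (P n).natDegree = n) ∧
    (∀ m n, m ≠ n → u (P m * P n) = 0) ∧ (∀ n, u (P n ^ 2) ≠ 0)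

/-- `P` is the monic OPS with respect to `u`. -/
def IsMonicOPS (u : PDual) (P : ℕ → Polynomial ℂ) : Prop :=
  (∀ n, (P n).Monic ∧ (P n).natDegree = n) ∧
    (∀ m n, m ≠ n → u (P m * P n) = 0) ∧ (∀ n, u (P n ^ 2) ≠ 0)

/-- Continuous case: `d_n = d + a·n`. -/
def ddC (a d : ℂ) (n : ℕ) : ℂ := d + a * n

/-- Continuous case: `e_n = e + b·n`. -/
def eeC (b e : ℂ) (n : ℕ) : ℂ := e + b * n

/-- Continuous case: `β_n = n·e_{n-1}/d_{2n-2} - (n+1)·e_n/d_{2n}`. -/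
def betaC (a b d e : ℂ) (n : ℕ) : ℂ :=
  n * eeC b e (n - 1) / ddC a d (2 * n - 2) - (n + 1) * eeC b e n / ddC a d (2 * n)

/-- Continuous case: `γ_{n+1} = -((n+1)·d_{n-1}/(d_{2n-1}·d_{2n+1}))·φ(-e_n/d_{2n})`. -/
def gammaC (a b d e : ℂ) (φ : Polynomial ℂ) (n : ℕ) : ℂ :=
  -((n + 1) * ddC a d (n - 1) / (ddC a d (2 * n - 1) * ddC a d (2 * n + 1))) *
    φ.eval (-(eeC b e n) / ddC a d (2 * n))

/-- `d_n = d·q^n + a·[n]_q`. -/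
def ddQ (q a d : ℂ) (n : ℕ) : ℂ := d * q ^ n + a * qBracket q n

/-- `e_n = e·q^n + (ω·d_n + b)·[n]_q`. -/
def eeQ (q ω a b d e : ℂ) (n : ℕ) : ℂ :=
  e * q ^ n + (ω * ddQ q a d n + b) * qBracket q n

/-- `β_n = ω[n]_q + [n]_q·e_{n-1}/d_{2n-2} - [n+1]_q·e_n/d_{2n}`. -/
def betaQ (q ω a b d e : ℂ) (n : ℕ) : ℂ :=
  ω * qBracket q n + qBracket q n * eeQ q ω a b d e (n - 1) / ddQ q a d (2 * n - 2)
    - qBracket q (n + 1) * eeQ q ω a b d e n / ddQ q a d (2 * n)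

/-- `γ_{n+1} = -(q^n·[n+1]_q·d_{n-1}/(d_{2n-1}·d_{2n+1}))·φ(-e_n/d_{2n})`. -/
def gammaQ (q ω a b d e : ℂ) (φ : Polynomial ℂ) (n : ℕ) : ℂ :=
  -(q ^ n * qBracket q (n + 1) * ddQ q a d (n - 1) /
      (ddQ q a d (2 * n - 1) * ddQ q a d (2 * n + 1))) *
    φ.eval (-(eeQ q ω a b d e n) / ddQ q a d (2 * n))

/-- `Φ(x;n) = ∏_{j=1}^n φ(q^j x + ω[j]_q)`. -/
def PhiQ (q ω : ℂ) (φ : Polynomial ℂ) (n : ℕ) : Polynomial ℂ :=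
  ∏ j ∈ Finset.range n, φ.comp (C (q ^ (j + 1)) * X + C (ω * qBracket q (j + 1)))

/-- `k_n = q^{n(n-3)/2}·∏_{j=0}^{n-1} d_{n+j-1}⁻¹`. -/
def kQ (q a d : ℂ) (n : ℕ) : ℂ :=
  q ^ (((n : ℤ) * ((n : ℤ) - 3)) / 2) * ∏ j ∈ Finset.range n, (ddQ q a d (n + j - 1))⁻¹

lemma pMul_apply (p : ℂ[X]) (u : PDual) (f : ℂ[X]) : pMul p u f = u (p * f) := rfl

lemma pMul_mul (p q : ℂ[X]) (u : PDual) : pMul (p * q) u = pMul p (pMul q u) :=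
  LinearMap.ext fun f => by simp only [pMul_apply, mul_assoc, mul_left_comm q]

lemma pMul_add (p q : ℂ[X]) (u : PDual) : pMul (p + q) u = pMul p u + pMul q u :=
  LinearMap.ext fun f => by simp [pMul_apply, add_mul]

lemma pMul_sub (p q : ℂ[X]) (u : PDual) : pMul (p - q) u = pMul p u - pMul q u :=
  LinearMap.ext fun f => by simp [pMul_apply, sub_mul]

lemma pMul_C_mul (c : ℂ) (p : ℂ[X]) (u : PDual) : pMul (C c * p) u = c • pMul p u :=
  LinearMap.ext fun f => by simp [pMul_apply, ← smul_eq_C_mul]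

lemma dDeriv_pMul (p : ℂ[X]) (u : PDual) :
    dDeriv (pMul p u) = pMul (derivative p) u + pMul p (dDeriv u) :=
  LinearMap.ext fun f => by
    simp only [dDeriv, pMul_apply, LinearMap.neg_apply, LinearMap.comp_apply,
      LinearMap.add_apply, derivative_mul, map_add]
    ring

lemma iterate_dDeriv_apply (u : PDual) (n : ℕ) (f : ℂ[X]) :
    (dDeriv^[n] u) f = (-1) ^ n * u (derivative^[n] f) := by
  induction n generalizing f with
  | zero => simp
  | succ n ih =>
    rw [Function.iterate_succ_apply', dDeriv, LinearMap.neg_apply, LinearMap.comp_apply, ih,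
      Function.iterate_succ_apply]
    ring

lemma degreeLT_le_ker_iterate_dDeriv (u : PDual) (n : ℕ) :
    degreeLT ℂ n ≤ LinearMap.ker (dDeriv^[n] u) := fun f hf => by
  rw [LinearMap.mem_ker, iterate_dDeriv_apply,
    iterate_derivative_eq_zero_of_degree_lt (mem_degreeLT.mp hf), map_zero, mul_zero]

def rodriguesStep (φ ψ : ℂ[X]) (m : ℕ) (π : ℂ[X]) : ℂ[X] :=
  derivative π * φ + π * (C (m : ℂ) * derivative φ + ψ)

-- This form bounds the degree without a case split on whether `π` is constant.
lemma rodriguesStep_eq (φ ψ : ℂ[X]) (m : ℕ) (π : ℂ[X]) :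
    rodriguesStep φ ψ m π =
      derivative (π * φ) + π * (C (m : ℂ) * derivative φ + ψ - derivative φ) := by
  rw [rodriguesStep, derivative_mul]
  ring

lemma dDeriv_pMul_mul_pow_succ {φ ψ : ℂ[X]} {u : PDual} (heq : dDeriv (pMul φ u) = pMul ψ u)
    (π : ℂ[X]) (m : ℕ) :
    dDeriv (pMul (π * φ ^ (m + 1)) u) = pMul (rodriguesStep φ ψ m π * φ ^ m) u := by
  have hpow : derivative (φ ^ m) * φ = C (m : ℂ) * derivative φ * φ ^ m := by
    cases m with
    | zero => simp
    | succ m => rw [derivative_pow_succ]; push_cast; ring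
  rw [pow_succ, ← mul_assoc, pMul_mul, dDeriv_pMul, heq, ← pMul_mul, ← pMul_mul, ← pMul_add,
    rodriguesStep]
  congr 1
  rw [derivative_mul]
  linear_combination π * hpow

def rodriguesPoly (φ ψ : ℂ[X]) (n : ℕ) : ℕ → ℂ[X]
  | 0 => 1
  | k + 1 => rodriguesStep φ ψ (n - k - 1) (rodriguesPoly φ ψ n k)

lemma iterate_dDeriv_pMul_pow {φ ψ : ℂ[X]} {u : PDual} (heq : dDeriv (pMul φ u) = pMul ψ u)
    {n k : ℕ} (hk : k ≤ n) :
    dDeriv^[k] (pMul (φ ^ n) u) = pMul (rodriguesPoly φ ψ n k * φ ^ (n - k)) u := by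
  induction k with
  | zero => simp [rodriguesPoly]
  | succ k ih =>
    rw [Function.iterate_succ_apply', ih (by omega), show n - k = n - k - 1 + 1 by omega,
      dDeriv_pMul_mul_pow_succ heq, rodriguesPoly, Nat.sub_sub]

section Degree

variable {φ ψ : ℂ[X]} (hφ : φ.natDegree ≤ 2) (hψ : ψ.natDegree ≤ 1)
include hφ hψ

lemma natDegree_C_mul_derivative_add_sub_le (m : ℕ) :
    (C (m : ℂ) * derivative φ + ψ - derivative φ).natDegree ≤ 1 := by
  have hφ' : (derivative φ).natDegree ≤ 1 := (natDegree_derivative_le φ).trans (by omega)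
  exact natDegree_sub_le_of_le
    (natDegree_add_le_of_degree_le ((natDegree_C_mul_le _ _).trans hφ') hψ) hφ'

lemma natDegree_rodriguesStep_le {π : ℂ[X]} {k : ℕ} (hπ : π.natDegree ≤ k) (m : ℕ) :
    (rodriguesStep φ ψ m π).natDegree ≤ k + 1 := by
  rw [rodriguesStep_eq]
  refine natDegree_add_le_of_degree_le ((natDegree_derivative_le _).trans ?_)
    (natDegree_mul_le_of_le hπ (natDegree_C_mul_derivative_add_sub_le hφ hψ m))
  have := natDegree_mul_le_of_le hπ hφ
  omega

lemma coeff_rodriguesStep {π : ℂ[X]} {k : ℕ} (hπ : π.natDegree ≤ k) (m : ℕ) :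
    (rodriguesStep φ ψ m π).coeff (k + 1) =
      ddC (φ.coeff 2) (ψ.coeff 1) (k + 2 * m) * π.coeff k := by
  rw [rodriguesStep_eq, coeff_add, coeff_derivative, show k + 1 + 1 = k + 2 from rfl,
    coeff_mul_add_eq_of_natDegree_le hπ hφ,
    coeff_mul_add_eq_of_natDegree_le hπ (natDegree_C_mul_derivative_add_sub_le hφ hψ m)]
  simp only [ddC, coeff_sub, coeff_add, map_natCast, coeff_natCast_mul, coeff_derivative,
    Nat.cast_add, Nat.cast_mul, Nat.cast_one, Nat.cast_ofNat, Nat.reduceAdd]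
  ring

lemma natDegree_rodriguesPoly_le (n k : ℕ) : (rodriguesPoly φ ψ n k).natDegree ≤ k := by
  induction k with
  | zero => simp [rodriguesPoly]
  | succ k ih => exact natDegree_rodriguesStep_le hφ hψ ih _

lemma coeff_rodriguesPoly (n k : ℕ) :
    (rodriguesPoly φ ψ n k).coeff k =
      ∏ i ∈ Finset.range k, ddC (φ.coeff 2) (ψ.coeff 1) (i + 2 * (n - i - 1)) := by
  induction k with
  | zero => simp [rodriguesPoly]
  | succ k ih =>
    rw [rodriguesPoly, coeff_rodriguesStep hφ hψ (natDegree_rodriguesPoly_le hφ hψ n k), ih,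
      Finset.prod_range_succ, mul_comm]

lemma coeff_rodriguesPoly_self (n : ℕ) :
    (rodriguesPoly φ ψ n n).coeff n =
      ∏ j ∈ Finset.range n, ddC (φ.coeff 2) (ψ.coeff 1) (n + j - 1) := by
  rw [coeff_rodriguesPoly hφ hψ, ← Finset.prod_range_reflect]
  refine Finset.prod_congr rfl fun j hj => ?_
  rw [Finset.mem_range] at hj
  congr 1
  omega

end Degree

namespace IsMonicOPS

variable {u : PDual} {P : ℕ → ℂ[X]} (hP : IsMonicOPS u P)
include hP

lemma span_image_Iio (m : ℕ) : Submodule.span ℂ (P '' Set.Iio m) = degreeLT ℂ m :=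
  Polynomial.Sequence.span_degreeLT
    ⟨P, fun i => by rw [degree_eq_natDegree (hP.1 i).1.ne_zero, (hP.1 i).2]⟩
    fun i _ => by simp [(hP.1 i).1.leadingCoeff]

lemma degreeLT_le_ker_pMul (m : ℕ) : degreeLT ℂ m ≤ LinearMap.ker (pMul (P m) u) := by
  rw [← hP.span_image_Iio, Submodule.span_le]
  rintro _ ⟨j, hj, rfl⟩
  exact hP.2.1 m j (Set.mem_Iio.mp hj).ne'

lemma coeff_self (n : ℕ) : (P n).coeff n = 1 := by
  simpa [(hP.1 n).2] using (hP.1 n).1.coeff_natDegree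

lemma mem_degreeLT_of_lt {m n : ℕ} (h : m < n) : P m ∈ degreeLT ℂ n := by
  rwa [Polynomial.mem_degreeLT, degree_eq_natDegree (hP.1 m).1.ne_zero, (hP.1 m).2, Nat.cast_lt]

lemma sub_C_coeff_mul_mem_degreeLT {f : ℂ[X]} {n : ℕ} (hf : f.natDegree ≤ n) :
    f - C (f.coeff n) * P n ∈ degreeLT ℂ n := by
  rw [Polynomial.mem_degreeLT, degree_lt_iff_coeff_zero]
  intro j hj
  rcases (Nat.cast_le.mp hj).eq_or_lt with rfl | hlt
  · simp [hP.coeff_self]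
  · rw [coeff_sub, coeff_C_mul, coeff_eq_zero_of_natDegree_lt (hf.trans_lt hlt),
      coeff_eq_zero_of_natDegree_lt ((hP.1 n).2.trans_lt hlt), mul_zero, sub_zero]

lemma eq_zero_of_degreeLT_le_ker {g : ℂ[X]} {n : ℕ} (hg : g ∈ degreeLT ℂ n)
    (hker : degreeLT ℂ n ≤ LinearMap.ker (pMul g u)) : g = 0 := by
  by_contra hg0
  set m := g.natDegree
  have hmn : m < n := by
    rwa [Polynomial.mem_degreeLT, degree_eq_natDegree hg0, Nat.cast_lt] at hg
  -- Pair `g` with `P m`, `m = deg g`: only the top term of `g` survives.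
  have h1 : u (g * P m) = 0 := hker (hP.mem_degreeLT_of_lt hmn)
  have h2 : u (P m * (g - C g.leadingCoeff * P m)) = 0 :=
    hP.degreeLT_le_ker_pMul m (hP.sub_C_coeff_mul_mem_degreeLT le_rfl)
  rw [mul_sub, map_sub, mul_comm (P m) g, h1, mul_left_comm, ← smul_eq_C_mul, map_smul,
    zero_sub, neg_eq_zero, smul_eq_mul, ← sq] at h2
  exact mul_ne_zero (leadingCoeff_ne_zero.mpr hg0) (hP.2.2 m) h2

lemma eq_C_coeff_mul_of_degreeLT_le_ker {R : ℂ[X]} {n : ℕ} (hR : R.natDegree ≤ n)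
    (hker : degreeLT ℂ n ≤ LinearMap.ker (pMul R u)) : R = C (R.coeff n) * P n := by
  rw [← sub_eq_zero]
  refine hP.eq_zero_of_degreeLT_le_ker (hP.sub_C_coeff_mul_mem_degreeLT hR) fun f hf => ?_
  rw [LinearMap.mem_ker, pMul_sub, pMul_C_mul, LinearMap.sub_apply, LinearMap.smul_apply,
    LinearMap.mem_ker.mp (hker hf), LinearMap.mem_ker.mp (hP.degreeLT_le_ker_pMul n hf),
    smul_zero, sub_zero]

end IsMonicOPS

theorem stmt_2_general (a b c d e : ℂ) (φ ψ : Polynomial ℂ)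
    (hφ : φ = C a * X ^ 2 + C b * X + C c) (hψ : ψ = C d * X + C e)
    (u : PDual)
    (heq : dDeriv (pMul φ u) = pMul ψ u)
    (hcond : ∀ n : ℕ, ddC a d n ≠ 0 ∧ φ.eval (-(eeC b e n) / ddC a d (2 * n)) ≠ 0)
    (P : ℕ → Polynomial ℂ) (hP : IsMonicOPS u P) :
    ∀ n : ℕ, pMul (P n) u =
      (∏ j ∈ Finset.range n, (ddC a d (n + j - 1))⁻¹) • dDeriv^[n] (pMul (φ ^ n) u) := by
  intro n
  have hφ2 : φ.natDegree ≤ 2 := by rw [hφ]; compute_degree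
  have hψ1 : ψ.natDegree ≤ 1 := by rw [hψ]; compute_degree
  have hD : dDeriv^[n] (pMul (φ ^ n) u) = pMul (rodriguesPoly φ ψ n n) u := by
    simpa using iterate_dDeriv_pMul_pow heq le_rfl
  have hR : rodriguesPoly φ ψ n n = C (∏ j ∈ Finset.range n, ddC a d (n + j - 1)) * P n := by
    have := hP.eq_C_coeff_mul_of_degreeLT_le_ker (natDegree_rodriguesPoly_le hφ2 hψ1 n n)
      (hD ▸ degreeLT_le_ker_iterate_dDeriv _ n)
    rwa [coeff_rodriguesPoly_self hφ2 hψ1, show φ.coeff 2 = a by simp [hφ],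
      show ψ.coeff 1 = d by simp [hψ]] at this
  rw [hD, hR, pMul_C_mul, smul_smul, ← Finset.prod_mul_distrib,
    Finset.prod_eq_one fun j _ => inv_mul_cancel₀ (hcond _).1, one_smul]

theorem stmt_2 (a b c d e : ℂ) (φ ψ : Polynomial ℂ)
    (hφ : φ = C a * X ^ 2 + C b * X + C c) (hψ : ψ = C d * X + C e)
    (hne : φ ≠ 0 ∨ ψ ≠ 0)
    (u : PDual) (hu : u ≠ 0)
    (heq : dDeriv (pMul φ u) = pMul ψ u)
    (hcond : ∀ n : ℕ, ddC a d n ≠ 0 ∧ φ.eval (-(eeC b e n) / ddC a d (2 * n)) ≠ 0)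
    (P : ℕ → Polynomial ℂ) (hP : IsMonicOPS u P) :
    ∀ n : ℕ, pMul (P n) u =
      (∏ j ∈ Finset.range n, (ddC a d (n + j - 1))⁻¹) • dDeriv^[n] (pMul (φ ^ n) u) :=
  stmt_2_general a b c d e φ ψ hφ hψ u heq hcond P hP

end HahnOPSPaper
end
end

section
/- Let u be a nonzero linear functional on 𝒫 satisfying D_{q,ω}(φu) = ψu, where φ(x) = ax² + bx + c has degree at most 2, ψ(x) = dx + e has degree at most 1, and at least one of φ, ψ is not the zero polynomial. If d_n ≠ 0 and φ(−e_n/d_{2n}) ≠ 0 for every integer n ≥ 0, then u is regular. -/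
/-!
Write `L` for `L_{q,ω}` and `D = q⁻¹ D*_{q,ω} ∘ L` for Hahn's operator, so that the Pearson
equation reads `u(φ·Dg + ψ·Lg) = 0` for all `g`. The operator `f ↦ L⁻¹(φ·D²f + ψ·L(Df))` is
triangular with diagonal `μₙ = q⁻ⁿ [n]_q d_{n-1}`, and these are pairwise distinct because
`qⁿ (μₙ - μₘ) = [n-m]_q d_{n+m-1}`; so there are monic eigenpolynomials `Rₙ`. The Pearson equation
makes the operator symmetric, `μ·u(L(f S)) = -u(φ·Df·DS)` for an eigenpolynomial `S`, hence the
`L Rₙ` are orthogonal, and `u(1) ≠ 0` because `u` kills every `L Rₙ` with `n ≥ 1`.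

For the norms, `u₁(f) = u(φ·L⁻¹f)` satisfies a Pearson equation with `ψ` replaced by `q·Lψ + Dφ`,
and `D` maps eigenpolynomials of the old operator to those of the new one. Taking `f = S` above
gives `μ·u(L S²) = -u₁(L (DS)²)`; writing `u_k` for the `k`-th shift, iterating reduces
`u(L Rₙ²) ≠ 0` to `uₙ(1) ≠ 0`. Finally `u_{k+1}(1) = u_k(φ)`, and testing the `k`-th Pearson
equation against `1` and `x` gives `d_{2k} (a + q d_{2k}) u_k(φ) = q d_{2k}² φ(-e_k/d_{2k}) u_k(1)`.
-/

open Polynomial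

noncomputable section

namespace HahnOPSPaper

section HasTopCoeff

variable {R : Type*} [CommSemiring R] {p r : R[X]} {m n : ℕ} {v w : R}

def HasTopCoeff (p : R[X]) (n : ℕ) (v : R) : Prop := p.natDegree ≤ n ∧ p.coeff n = v

theorem hasTopCoeff_C (v : R) : HasTopCoeff (C v) 0 v := ⟨(natDegree_C v).le, coeff_C_zero⟩

theorem hasTopCoeff_X_pow (n : ℕ) : HasTopCoeff (X ^ n : R[X]) n 1 :=
  ⟨natDegree_X_pow_le n, coeff_X_pow_self n⟩

theorem hasTopCoeff_linear (d e : R) : HasTopCoeff (C d * X + C e) 1 d :=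
  ⟨natDegree_linear_le, by simp⟩

theorem hasTopCoeff_quadratic (a b c : R) : HasTopCoeff (C a * X ^ 2 + C b * X + C c) 2 a :=
  ⟨natDegree_quadratic_le, by simp⟩

theorem hasTopCoeff_zero : HasTopCoeff (0 : R[X]) n 0 := ⟨by simp, by simp⟩

theorem HasTopCoeff.of_natDegree_lt (h : p.natDegree < n) : HasTopCoeff p n 0 :=
  ⟨h.le, coeff_eq_zero_of_natDegree_lt h⟩

theorem hasTopCoeff_zero_iff_degree_lt : HasTopCoeff p n 0 ↔ p.degree < n := by
  rw [degree_lt_iff_coeff_zero, HasTopCoeff, natDegree_le_iff_coeff_eq_zero]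
  refine ⟨fun h m hm => hm.eq_or_lt.elim (· ▸ h.2) (h.1 m <| by exact_mod_cast ·),
    fun h => ⟨fun m hm => h m (by exact_mod_cast hm.le), h n le_rfl⟩⟩

theorem hasTopCoeff_succ_zero_iff : HasTopCoeff p (n + 1) 0 ↔ p.natDegree ≤ n := by
  refine ⟨fun h => natDegree_le_iff_coeff_eq_zero.mpr fun m hm => ?_,
    fun h => .of_natDegree_lt (Nat.lt_succ_of_le h)⟩
  rcases (Nat.succ_le_of_lt hm).eq_or_lt with rfl | hm'
  · exact h.2
  · exact coeff_eq_zero_of_natDegree_lt (h.1.trans_lt hm')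

theorem HasTopCoeff.eq_C (h : HasTopCoeff p 0 v) : p = C v := by
  rw [eq_C_of_natDegree_le_zero h.1, h.2]

theorem HasTopCoeff.add (hp : HasTopCoeff p n v) (hr : HasTopCoeff r n w) :
    HasTopCoeff (p + r) n (v + w) :=
  ⟨natDegree_add_le_of_degree_le hp.1 hr.1, by rw [coeff_add, hp.2, hr.2]⟩

theorem HasTopCoeff.sub {R : Type*} [CommRing R] {p r : R[X]} {n : ℕ} {v w : R}
    (hp : HasTopCoeff p n v) (hr : HasTopCoeff r n w) : HasTopCoeff (p - r) n (v - w) :=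
  ⟨(natDegree_sub_le _ _).trans (max_le hp.1 hr.1), by rw [coeff_sub, hp.2, hr.2]⟩

theorem HasTopCoeff.smul (c : R) (hp : HasTopCoeff p n v) : HasTopCoeff (c • p) n (c * v) :=
  ⟨(natDegree_smul_le c p).trans hp.1, by rw [coeff_smul, hp.2, smul_eq_mul]⟩

theorem HasTopCoeff.mul (hp : HasTopCoeff p m v) (hr : HasTopCoeff r n w) :
    HasTopCoeff (p * r) (m + n) (v * w) :=
  ⟨natDegree_mul_le_of_le hp.1 hr.1, by
    rw [coeff_mul_add_eq_of_natDegree_le hp.1 hr.1, hp.2, hr.2]⟩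

theorem HasTopCoeff.pow (hp : HasTopCoeff p m v) (k : ℕ) :
    HasTopCoeff (p ^ k) (m * k) (v ^ k) := by
  induction k with
  | zero => simpa using hasTopCoeff_C (1 : R)
  | succ k ih => simpa [pow_succ, Nat.mul_succ] using ih.mul hp

theorem HasTopCoeff.monic [Nontrivial R] (h : HasTopCoeff p n 1) :
    p.Monic ∧ p.natDegree = n :=
  ⟨monic_of_natDegree_le_of_coeff_eq_one n h.1 h.2,
    natDegree_eq_of_le_of_coeff_ne_zero h.1 (h.2 ▸ one_ne_zero)⟩

theorem hasTopCoeff_apply_of_forall_X_pow (T : R[X] →ₗ[R] R[X]) {c : R}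
    (hT : ∀ i ≤ m, HasTopCoeff (T (X ^ i)) n (if i = m then c else 0))
    (hp : p.natDegree ≤ m) : HasTopCoeff (T p) n (c * p.coeff m) := by
  refine induction_with_natDegree_le (fun p => HasTopCoeff (T p) n (c * p.coeff m)) m
    (by simpa using (hasTopCoeff_zero : HasTopCoeff (0 : R[X]) n 0)) (fun i r _ hi => ?_)
    (fun f g _ _ hf hg => ?_) p hp
  · rw [← smul_eq_C_mul, map_smul, coeff_smul, coeff_X_pow, smul_eq_mul]
    convert (hT i hi).smul r using 1
    by_cases h : i = m
    · subst h; simp [mul_comm]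
    · simp [h, Ne.symm h]
  · simpa only [map_add, coeff_add, mul_add] using hf.add hg

end HasTopCoeff

section QBracket

variable {q : ℂ}

@[simp] theorem qBracket_zero : qBracket q 0 = 0 := by simp [qBracket]

@[simp] theorem qBracket_one : qBracket q 1 = 1 := by simp [qBracket]

theorem qBracket_add (m n : ℕ) : qBracket q (m + n) = qBracket q m + q ^ m * qBracket q n := by
  simp only [qBracket, Finset.sum_range_add, pow_add, Finset.mul_sum]

theorem qBracket_succ (n : ℕ) : qBracket q (n + 1) = 1 + q * qBracket q n := by
  rw [add_comm, qBracket_add, qBracket_one, pow_one]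

theorem qBracket_mul_sub_one (n : ℕ) : qBracket q n * (q - 1) = q ^ n - 1 := geom_sum_mul q n

theorem qBracket_ne_zero (hqr : ∀ n : ℕ, 0 < n → q ^ n = 1 → q = 1) {n : ℕ}
    (hn : n ≠ 0) : qBracket q n ≠ 0 := by
  intro h
  by_cases hq1 : q = 1
  · subst hq1
    simp [qBracket, hn] at h
  · have := qBracket_mul_sub_one (q := q) n
    rw [h, zero_mul, eq_comm, sub_eq_zero] at this
    exact hq1 (hqr n (Nat.pos_of_ne_zero hn) this)

theorem ddQ_add (a d : ℂ) (m n : ℕ) :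
    ddQ q a d (m + n) = q ^ m * ddQ q a d n + a * qBracket q m := by
  simp only [ddQ, qBracket_add, pow_add]
  ring

end QBracket

section Lop

variable {q ω : ℂ}

theorem Lop_apply (f : ℂ[X]) : Lop q ω f = f.comp (C q * X + C ω) := by
  simp [Lop, comp, aeval_def]

@[simp] theorem Lop_C (x : ℂ) : Lop q ω (C x) = C x := by simp [Lop]

@[simp] theorem Lop_X : Lop q ω X = C q * X + C ω := by simp [Lop]

@[simp] theorem Lop_one : Lop q ω 1 = 1 := by simp [Lop]

theorem Lop_mul (f g : ℂ[X]) : Lop q ω (f * g) = Lop q ω f * Lop q ω g := by simp [Lop]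

@[simp] theorem Lop_X_pow (n : ℕ) : Lop q ω (X ^ n) = (C q * X + C ω) ^ n := by simp [Lop]

theorem Lop_hahnFactor : Lop q ω (C (q - 1) * X + C ω) = C q * (C (q - 1) * X + C ω) := by
  simp only [Lop_apply, add_comp, mul_comp, C_comp, X_comp]
  simp only [C_sub, C_1]
  ring

theorem comp_affine_inv (hq : q ≠ 0) :
    (C q * X + C ω).comp (C q⁻¹ * X + C (-ω / q)) = X := by
  simp only [add_comp, mul_comp, C_comp, X_comp, mul_add, ← mul_assoc, ← C_mul, add_assoc,
    ← C_add, mul_inv_cancel₀ hq, mul_div_cancel₀ _ hq, neg_add_cancel, C_1, C_0, one_mul,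
    add_zero]

theorem Lop_inv_Lop (hq : q ≠ 0) (f : ℂ[X]) : Lop q⁻¹ (-ω / q) (Lop q ω f) = f := by
  rw [Lop_apply, Lop_apply, comp_assoc, comp_affine_inv hq, comp_X]

theorem Lop_Lop_inv (hq : q ≠ 0) (f : ℂ[X]) : Lop q ω (Lop q⁻¹ (-ω / q) f) = f := by
  have := comp_affine_inv (q := q⁻¹) (ω := -ω / q) (inv_ne_zero hq)
  rw [inv_inv, show -(-ω / q) / q⁻¹ = ω by field_simp] at this
  rw [Lop_apply, Lop_apply, comp_assoc, this, comp_X]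

theorem HasTopCoeff.Lop (q ω : ℂ) {f : ℂ[X]} {n : ℕ} {v : ℂ} (hf : HasTopCoeff f n v) :
    HasTopCoeff (Lop q ω f) n (q ^ n * v) := by
  refine hf.2 ▸ hasTopCoeff_apply_of_forall_X_pow _ (fun i hi => ?_) hf.1
  have h := (hasTopCoeff_linear q ω).pow i
  rw [one_mul] at h
  rw [Lop_X_pow]
  split_ifs with hin
  · exact hin ▸ h
  · exact .of_natDegree_lt (h.1.trans_lt (lt_of_le_of_ne hi hin))

end Lop

section Hahn

variable {q ω : ℂ} {D : ℂ[X] →ₗ[ℂ] ℂ[X]}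

theorem hahnFactor_ne_zero (hqω : q ≠ 1 ∨ ω ≠ 0) : C (q - 1) * X + C ω ≠ 0 := by
  intro h
  rcases hqω with hq | hω
  · simpa [sub_eq_zero, hq] using congrArg (coeff · 1) h
  · simpa [hω] using congrArg (coeff · 0) h

theorem IsHahn.of_inv {Dstar : ℂ[X] →ₗ[ℂ] ℂ[X]} (hq : q ≠ 0)
    (h : IsHahn q⁻¹ (-ω / q) Dstar) : IsHahn q ω (q⁻¹ • (Dstar ∘ₗ Lop q ω)) := by
  intro f
  have hf := h (Lop q ω f)
  rw [← Lop_apply, Lop_inv_Lop hq] at hf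
  have hπ : (C (q - 1) * X + C ω) * C q⁻¹ = -(C (q⁻¹ - 1) * X + C (-ω / q)) := by
    have e1 : (q - 1) * q⁻¹ = -(q⁻¹ - 1) := by field_simp; ring
    have e2 : ω * q⁻¹ = -(-ω / q) := by ring
    rw [add_mul, mul_right_comm, ← C_mul, ← C_mul, e1, e2, C_neg, C_neg]
    ring
  rw [← Lop_apply, LinearMap.smul_apply, LinearMap.comp_apply, smul_eq_C_mul, ← mul_assoc, hπ]
  linear_combination (-1 : ℂ[X]) * hf

namespace IsHahn

variable (hD : IsHahn q ω D) (hqω : q ≠ 1 ∨ ω ≠ 0)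
include hD

theorem hahnFactor_mul (f : ℂ[X]) : (C (q - 1) * X + C ω) * D f = Lop q ω f - f := by
  rw [Lop_apply]
  exact hD f

include hqω

theorem apply_eq {f p : ℂ[X]} (h : (C (q - 1) * X + C ω) * p = Lop q ω f - f) : D f = p :=
  mul_left_cancel₀ (hahnFactor_ne_zero hqω) ((hD.hahnFactor_mul f).trans h.symm)

theorem map_C (x : ℂ) : D (C x) = 0 := hD.apply_eq hqω (by simp)

theorem map_one : D 1 = 0 := by simpa using hD.map_C hqω 1

theorem map_X : D X = 1 := hD.apply_eq hqω (by simp only [Lop_X, C_sub, C_1]; ring)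

theorem map_mul (f g : ℂ[X]) : D (f * g) = Lop q ω f * D g + D f * g :=
  hD.apply_eq hqω (by
    rw [Lop_mul]
    linear_combination Lop q ω f * hD.hahnFactor_mul g + g * hD.hahnFactor_mul f)

theorem map_mul' (f g : ℂ[X]) : D (f * g) = f * D g + D f * Lop q ω g := by
  rw [mul_comm, hD.map_mul hqω]
  ring

theorem map_Lop (f : ℂ[X]) : D (Lop q ω f) = C q * Lop q ω (D f) :=
  hD.apply_eq hqω (by
    have h := congrArg (Lop q ω) (hD.hahnFactor_mul f)
    rw [Lop_mul, Lop_hahnFactor, map_sub (Lop q ω)] at h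
    linear_combination h)

theorem Lop_inv_apply (hq : q ≠ 0) (f : ℂ[X]) :
    Lop q⁻¹ (-ω / q) (D f) = C q * D (Lop q⁻¹ (-ω / q) f) := by
  conv_lhs => rw [← Lop_Lop_inv hq f, hD.map_Lop hqω, Lop_mul, Lop_C, Lop_inv_Lop hq]

theorem hasTopCoeff_apply_X_pow (n : ℕ) :
    HasTopCoeff (D (X ^ (n + 1))) n (qBracket q (n + 1)) := by
  induction n with
  | zero => simpa [hD.map_X hqω] using hasTopCoeff_C (1 : ℂ)
  | succ n ih =>
    rw [pow_succ', hD.map_mul hqω, Lop_X, hD.map_X hqω, one_mul, qBracket_succ (n + 1)]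
    have h := (hasTopCoeff_linear q ω).mul ih
    rw [add_comm 1 n] at h
    simpa [add_comm] using h.add (hasTopCoeff_X_pow (n + 1))

end IsHahn

theorem HasTopCoeff.hahn (hD : IsHahn q ω D) (hqω : q ≠ 1 ∨ ω ≠ 0) {f : ℂ[X]} {n : ℕ} {v : ℂ}
    (hf : HasTopCoeff f (n + 1) v) :
    HasTopCoeff (D f) n (qBracket q (n + 1) * v) := by
  refine hf.2 ▸ hasTopCoeff_apply_of_forall_X_pow _ (fun i hi => ?_) hf.1
  split_ifs with hin
  · exact hin ▸ hD.hasTopCoeff_apply_X_pow hqω n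
  · rcases i with _ | j
    · simpa [hD.map_one hqω] using hasTopCoeff_zero
    · exact .of_natDegree_lt ((hD.hasTopCoeff_apply_X_pow hqω j).1.trans_lt (by omega))

end Hahn

section Triangular

variable {K : Type*} [Field K]

theorem eq_zero_of_apply_hasTopCoeff_eq_zero (v : Module.Dual K K[X]) (Q : ℕ → K[X])
    (hQ : ∀ n, ∃ c ≠ 0, HasTopCoeff (Q n) n c) (hv : ∀ n, v (Q n) = 0) : v = 0 := by
  suffices h : ∀ n (f : K[X]), HasTopCoeff f n 0 → v f = 0 from
    LinearMap.ext fun f => h _ f (HasTopCoeff.of_natDegree_lt f.natDegree.lt_succ_self)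
  intro n
  induction n with
  | zero => intro f hf; simp [hf.eq_C]
  | succ n ih =>
    intro f hf
    obtain ⟨c, hc, hQn⟩ := hQ n
    have hf' : HasTopCoeff f n (f.coeff n) := ⟨hasTopCoeff_succ_zero_iff.mp hf, rfl⟩
    have hr := hf'.sub (hQn.smul (f.coeff n / c))
    rw [div_mul_cancel₀ _ hc, sub_self] at hr
    rw [← sub_add_cancel f ((f.coeff n / c) • Q n), map_add, map_smul, hv, smul_zero, add_zero,
      ih _ hr]

theorem exists_hasTopCoeff_eigenvector (T : K[X] →ₗ[K] K[X]) (μ : ℕ → K)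
    (hT : ∀ {n f v}, HasTopCoeff f n v → HasTopCoeff (T f) n (μ n * v))
    (hμ : ∀ {m n}, m < n → μ m ≠ μ n) (n : ℕ) :
    ∃ R : K[X], HasTopCoeff R n 1 ∧ T R = μ n • R := by
  set S := T - μ n • LinearMap.id
  have hS : ∀ p ∈ degreeLT K n, S p ∈ degreeLT K n := by
    intro p hp
    rw [mem_degreeLT, ← hasTopCoeff_zero_iff_degree_lt] at hp ⊢
    have h := (hT hp).sub (hp.smul (μ n))
    rwa [mul_zero, sub_zero] at h
  have hinj : Function.Injective (S.restrict hS) := by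
    rw [← LinearMap.ker_eq_bot, LinearMap.ker_eq_bot']
    rintro ⟨p, hp⟩ hSp
    by_contra hne
    have hp0 : p ≠ 0 := fun h => hne (Subtype.ext h)
    have hTp : T p = μ n • p := sub_eq_zero.mp (congrArg Subtype.val hSp)
    have hlc := (hT (f := p) ⟨le_rfl, rfl⟩).2
    rw [hTp, coeff_smul, smul_eq_mul] at hlc
    exact hμ ((natDegree_lt_iff_degree_lt hp0).mpr (mem_degreeLT.mp hp))
      (mul_right_cancel₀ (leadingCoeff_ne_zero.mpr hp0) hlc).symm
  have : Module.Finite K (degreeLT K n) := .equiv (degreeLTEquiv K n).symm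
  have hrhs : μ n • X ^ n - T (X ^ n) ∈ degreeLT K n := by
    rw [mem_degreeLT, ← hasTopCoeff_zero_iff_degree_lt]
    have h := ((hasTopCoeff_X_pow n).smul (μ n)).sub (hT (hasTopCoeff_X_pow n))
    rwa [sub_self] at h
  obtain ⟨⟨g, hg⟩, hSg⟩ := LinearMap.injective_iff_surjective.mp hinj ⟨_, hrhs⟩
  have hSg : T g - μ n • g = μ n • X ^ n - T (X ^ n) := congrArg Subtype.val hSg
  refine ⟨X ^ n + g, ?_, ?_⟩
  · simpa using (hasTopCoeff_X_pow n).add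
      (hasTopCoeff_zero_iff_degree_lt.mpr (mem_degreeLT.mp hg))
  · rw [map_add, smul_add]
    linear_combination (norm := module) hSg

end Triangular

section Pearson

variable (q ω : ℂ) (D : ℂ[X] →ₗ[ℂ] ℂ[X])

def IsPearson (φ ψ : ℂ[X]) (u : PDual) : Prop :=
  ∀ g : ℂ[X], u (φ * D g + ψ * Lop q ω g) = 0

def IsHahnEigen (φ ψ R : ℂ[X]) (μ : ℂ) : Prop :=
  φ * D (D R) + ψ * Lop q ω (D R) = C μ * Lop q ω R

def pearsonShift (φ : ℂ[X]) (u : PDual) : PDual := pMul φ u ∘ₗ Lop q⁻¹ (-ω / q)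

variable {q ω D} {φ ψ : ℂ[X]} {u : PDual}

theorem pearsonShift_apply (f : ℂ[X]) :
    pearsonShift q ω φ u f = u (φ * Lop q⁻¹ (-ω / q) f) :=
  rfl

theorem pearsonShift_apply_Lop (hq : q ≠ 0) (f : ℂ[X]) :
    pearsonShift q ω φ u (Lop q ω f) = u (φ * f) := by
  rw [pearsonShift_apply, Lop_inv_Lop hq]

theorem isPearson_of_hahnDual_eq {Dstar : ℂ[X] →ₗ[ℂ] ℂ[X]}
    (h : hahnDual q Dstar (pMul φ u) = pMul ψ u) :
    IsPearson q ω (q⁻¹ • (Dstar ∘ₗ Lop q ω)) φ ψ u := by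
  intro g
  have hg := LinearMap.congr_fun h (Lop q ω g)
  simp only [hahnDual, pMul, LinearMap.smul_apply, LinearMap.comp_apply,
    LinearMap.mulLeft_apply, smul_eq_mul] at hg
  rw [map_add, LinearMap.smul_apply, mul_smul_comm, map_smul, smul_eq_mul, LinearMap.comp_apply]
  linear_combination -hg

theorem IsPearson.shift (hD : IsHahn q ω D) (hqω : q ≠ 1 ∨ ω ≠ 0) (hq : q ≠ 0)
    (hP : IsPearson q ω D φ ψ u) :
    IsPearson q ω D φ (C q * Lop q ω ψ + D φ) (pearsonShift q ω φ u) := by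
  intro g
  set L' := Lop q⁻¹ (-ω / q)
  have key : φ * L' (φ * D g + (C q * Lop q ω ψ + D φ) * Lop q ω g)
      = C q * (φ * D (L' (φ * g)) + ψ * Lop q ω (L' (φ * g))) := by
    rw [Lop_Lop_inv hq, Lop_mul, hD.map_mul' hqω, Lop_Lop_inv hq, map_add, Lop_mul, Lop_mul,
      map_add, Lop_mul, Lop_C, Lop_inv_Lop hq, Lop_inv_Lop hq, hD.Lop_inv_apply hqω hq,
      hD.Lop_inv_apply hqω hq]
    ring
  rw [pearsonShift_apply, key, ← smul_eq_C_mul, map_smul, hP, smul_zero]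

theorem IsPearson.iterate_shift (hD : IsHahn q ω D) (hqω : q ≠ 1 ∨ ω ≠ 0) (hq : q ≠ 0)
    {ψ : ℕ → ℂ[X]} (hψ : ∀ k, ψ (k + 1) = C q * Lop q ω (ψ k) + D φ)
    (hP : IsPearson q ω D φ (ψ 0) u) (k : ℕ) :
    IsPearson q ω D φ (ψ k) ((pearsonShift q ω φ)^[k] u) := by
  induction k with
  | zero => exact hP
  | succ k ih =>
    rw [hψ, Function.iterate_succ_apply']
    exact ih.shift hD hqω hq

theorem IsHahnEigen.hahn (hD : IsHahn q ω D) (hqω : q ≠ 1 ∨ ω ≠ 0) {R : ℂ[X]}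
    {μ d : ℂ} (hψ : D ψ = C d) (hR : IsHahnEigen q ω D φ ψ R μ) :
    IsHahnEigen q ω D φ (C q * Lop q ω ψ + D φ) (D R) (q * μ - d) := by
  have h := congrArg D hR
  simp only [map_add, hD.map_mul hqω, hD.map_Lop hqω, hψ, hD.map_C hqω, Lop_C, zero_mul,
    add_zero] at h
  unfold IsHahnEigen
  rw [C_sub, C_mul]
  linear_combination h + D (D (D R)) * hD.hahnFactor_mul φ - D φ * hD.hahnFactor_mul (D (D R))

theorem IsPearson.mul_apply_Lop_mul (hD : IsHahn q ω D) (hqω : q ≠ 1 ∨ ω ≠ 0)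
    (hP : IsPearson q ω D φ ψ u) {S : ℂ[X]} {μ : ℂ} (hS : IsHahnEigen q ω D φ ψ S μ)
    (f : ℂ[X]) : μ * u (Lop q ω (f * S)) = -u (φ * (D f * D S)) := by
  unfold IsHahnEigen at hS
  have h := hP (f * D S)
  have harg : φ * D (f * D S) + ψ * Lop q ω (f * D S)
      = C μ * Lop q ω (f * S) + φ * (D f * D S) := by
    rw [hD.map_mul hqω, Lop_mul, Lop_mul]
    linear_combination Lop q ω f * hS
  rw [harg, map_add, ← smul_eq_C_mul, map_smul, smul_eq_mul] at h
  linear_combination h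

theorem IsPearson.apply_Lop_mul_eq_zero (hD : IsHahn q ω D) (hqω : q ≠ 1 ∨ ω ≠ 0)
    (hP : IsPearson q ω D φ ψ u) {R S : ℂ[X]} {μ ν : ℂ}
    (hR : IsHahnEigen q ω D φ ψ R μ) (hS : IsHahnEigen q ω D φ ψ S ν) (hμν : μ ≠ ν) :
    u (Lop q ω (R * S)) = 0 := by
  have h1 := hP.mul_apply_Lop_mul hD hqω hS R
  have h2 := hP.mul_apply_Lop_mul hD hqω hR S
  rw [mul_comm S, mul_comm (D S)] at h2
  have h : (ν - μ) * u (Lop q ω (R * S)) = 0 := by linear_combination h1 - h2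
  exact (mul_eq_zero.mp h).resolve_left (sub_ne_zero.mpr hμν.symm)

theorem IsPearson.iterate_shift_apply_Lop_mul_self_ne_zero (hD : IsHahn q ω D)
    (hqω : q ≠ 1 ∨ ω ≠ 0) (hq : q ≠ 0) (hqr : ∀ n : ℕ, 0 < n → q ^ n = 1 → q = 1)
    {ψ : ℕ → ℂ[X]} {dψ : ℕ → ℂ}
    (hψ : ∀ k, ψ (k + 1) = C q * Lop q ω (ψ k) + D φ) (hDψ : ∀ k, D (ψ k) = C (dψ k))
    (hP : IsPearson q ω D φ (ψ 0) u)
    (hu1 : ∀ k, (pearsonShift q ω φ)^[k] u 1 ≠ 0) (n : ℕ) :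
    ∀ {k : ℕ} {S : ℂ[X]} {μ c : ℂ}, c ≠ 0 → HasTopCoeff S n c →
      IsHahnEigen q ω D φ (ψ k) S μ →
        (pearsonShift q ω φ)^[k] u (Lop q ω (S * S)) ≠ 0 := by
  induction n with
  | zero =>
    intro k S μ c hc hS _
    rw [hS.eq_C, ← C_mul, Lop_C, ← mul_one (C _), ← smul_eq_C_mul, map_smul, smul_eq_mul]
    exact mul_ne_zero (mul_ne_zero hc hc) (hu1 k)
  | succ n ih =>
    intro k S μ c hc hS hE h0
    have h := (hP.iterate_shift hD hqω hq hψ k).mul_apply_Lop_mul hD hqω hE S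
    rw [h0, mul_zero, eq_comm, neg_eq_zero, ← pearsonShift_apply_Lop hq,
      ← Function.iterate_succ_apply' (pearsonShift q ω φ)] at h
    have hE' := hE.hahn hD hqω (hDψ k)
    rw [← hψ] at hE'
    exact ih (mul_ne_zero (qBracket_ne_zero hqr n.succ_ne_zero) hc) (hS.hahn hD hqω) hE' h

end Pearson

section Quadratic

variable {q ω : ℂ} {D : ℂ[X] →ₗ[ℂ] ℂ[X]}

theorem IsHahn.map_linear (hD : IsHahn q ω D) (hqω : q ≠ 1 ∨ ω ≠ 0) (d e : ℂ) :
    D (C d * X + C e) = C d := by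
  rw [map_add, hD.map_mul hqω, hD.map_X hqω, hD.map_C hqω, hD.map_C hqω, Lop_C]
  ring

theorem IsHahn.map_quadratic (hD : IsHahn q ω D) (hqω : q ≠ 1 ∨ ω ≠ 0) (a b c : ℂ) :
    D (C a * X ^ 2 + C b * X + C c) = C a * (C (q + 1) * X + C ω) + C b := by
  simp only [map_add, hD.map_mul hqω, pow_two, hD.map_X hqω, hD.map_C hqω, Lop_C, Lop_X, C_1]
  ring

theorem ddQ_two_mul_succ (a d : ℂ) (k : ℕ) :
    ddQ q a d (2 * (k + 1)) = q ^ 2 * ddQ q a d (2 * k) + a * (1 + q) := by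
  rw [show 2 * (k + 1) = 2 + 2 * k by ring, ddQ_add, qBracket_succ, qBracket_one, mul_one]

theorem eeQ_succ (a b d e : ℂ) (k : ℕ) :
    eeQ q ω a b d e (k + 1) = q * eeQ q ω a b d e k + ω * (q * ddQ q a d (2 * k) + a) + b := by
  have r1 : ddQ q a d (k + 1) = q * ddQ q a d k + a := by
    rw [add_comm, ddQ_add, qBracket_one, pow_one, mul_one]
  have r2 : ddQ q a d (2 * k) = q ^ k * ddQ q a d k + a * qBracket q k := by
    rw [two_mul, ddQ_add]
  simp only [eeQ, qBracket_succ, r1, r2, pow_succ]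
  linear_combination ω * q * ddQ q a d k * qBracket_mul_sub_one (q := q) k

def pearsonPsi (q ω a b d e : ℂ) (k : ℕ) : ℂ[X] :=
  C (ddQ q a d (2 * k)) * X + C (eeQ q ω a b d e k)

theorem pearsonPsi_zero (a b d e : ℂ) : pearsonPsi q ω a b d e 0 = C d * X + C e := by
  simp [pearsonPsi, ddQ, eeQ]

theorem IsHahn.pearsonPsi_succ (hD : IsHahn q ω D) (hqω : q ≠ 1 ∨ ω ≠ 0) (a b c d e : ℂ)
    (k : ℕ) : pearsonPsi q ω a b d e (k + 1)
      = C q * Lop q ω (pearsonPsi q ω a b d e k) + D (C a * X ^ 2 + C b * X + C c) := by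
  simp only [pearsonPsi, ddQ_two_mul_succ, eeQ_succ, hD.map_quadratic hqω, map_add, Lop_mul,
    Lop_C, Lop_X, C_mul, C_pow, C_1]
  ring

theorem IsPearson.moment (hD : IsHahn q ω D) (hqω : q ≠ 1 ∨ ω ≠ 0) {u : PDual}
    {a b c d e : ℂ} (hP : IsPearson q ω D (C a * X ^ 2 + C b * X + C c) (C d * X + C e) u) :
    d * (a + q * d) * u (C a * X ^ 2 + C b * X + C c)
      = q * (a * e ^ 2 - b * e * d + c * d ^ 2) * u 1 := by
  have apply_C_mul : ∀ (x : ℂ) (f : ℂ[X]), u (C x * f) = x * u f := fun x f => by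
    rw [← smul_eq_C_mul, map_smul, smul_eq_mul]
  set φ := C a * X ^ 2 + C b * X + C c with hφ
  have h1 := hP 1
  rw [hD.map_one hqω, Lop_one, mul_zero, zero_add, mul_one, ← mul_one (C e), map_add,
    apply_C_mul, apply_C_mul] at h1
  have h2 := hP X
  rw [hD.map_X hqω, Lop_X, mul_one, show (C d * X + C e) * (C q * X + C ω)
      = C (d * q) * X ^ 2 + C (d * ω + e * q) * X + C (e * ω) * 1 by
    simp only [C_mul, C_add]; ring] at h2
  simp only [map_add u, apply_C_mul] at h2
  have h3 : u φ = a * u (X ^ 2) + b * u X + c * u 1 := by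
    rw [hφ, ← mul_one (C c), map_add u, map_add u, apply_C_mul, apply_C_mul, apply_C_mul]
  linear_combination (d * q * d) * h3 + (d * a) * h2 + (b * q * d - a * q * e - a * ω * d) * h1

end Quadratic

section EigenOperator

variable (q ω : ℂ) (D : ℂ[X] →ₗ[ℂ] ℂ[X])

def hahnEigenOp (φ ψ : ℂ[X]) : ℂ[X] →ₗ[ℂ] ℂ[X] :=
  Lop q⁻¹ (-ω / q) ∘ₗ
    (LinearMap.mulLeft ℂ φ ∘ₗ D ∘ₗ D + LinearMap.mulLeft ℂ ψ ∘ₗ Lop q ω ∘ₗ D)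

/-- At `n = 0` the junk value `n - 1 = 0` is harmless because of the factor `[0]_q = 0`. -/
def hahnEigenvalue (q a d : ℂ) (n : ℕ) : ℂ := (q ^ n)⁻¹ * qBracket q n * ddQ q a d (n - 1)

variable {q ω D} {a d : ℂ}

theorem hahnEigenOp_apply (φ ψ f : ℂ[X]) :
    hahnEigenOp q ω D φ ψ f = Lop q⁻¹ (-ω / q) (φ * D (D f) + ψ * Lop q ω (D f)) :=
  rfl

theorem isHahnEigen_iff (hq : q ≠ 0) {φ ψ R : ℂ[X]} {μ : ℂ} :
    IsHahnEigen q ω D φ ψ R μ ↔ hahnEigenOp q ω D φ ψ R = μ • R := by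
  rw [IsHahnEigen, hahnEigenOp_apply, smul_eq_C_mul]
  constructor
  · intro h
    rw [h, Lop_mul, Lop_C, Lop_inv_Lop hq]
  · intro h
    simpa [Lop_Lop_inv hq, Lop_mul] using congrArg (Lop q ω) h

theorem HasTopCoeff.hahnEigenOp (hD : IsHahn q ω D) (hqω : q ≠ 1 ∨ ω ≠ 0) (b c e : ℂ)
    {f : ℂ[X]} {n : ℕ} {v : ℂ} (hf : HasTopCoeff f n v) :
    HasTopCoeff (hahnEigenOp q ω D (C a * X ^ 2 + C b * X + C c) (C d * X + C e) f) n
      (hahnEigenvalue q a d n * v) := by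
  rw [hahnEigenOp_apply]
  rcases n with _ | _ | m
  · rw [hf.eq_C, hD.map_C hqω]
    simpa [hahnEigenvalue] using hasTopCoeff_zero
  · have hDf := hf.hahn hD hqω
    rw [hDf.eq_C, hD.map_C hqω, mul_zero, zero_add]
    convert ((hasTopCoeff_linear d e).mul ((hasTopCoeff_C _).Lop q ω)).Lop q⁻¹ (-ω / q) using 1
    simp [hahnEigenvalue, ddQ]
    ring
  · have hDf := hf.hahn hD hqω
    have h1 := (hasTopCoeff_quadratic a b c).mul (hDf.hahn hD hqω)
    have h2 := (hasTopCoeff_linear d e).mul (hDf.Lop q ω)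
    rw [show 2 + m = m + 1 + 1 by omega] at h1
    rw [show 1 + (m + 1) = m + 1 + 1 by omega] at h2
    convert (h1.add h2).Lop q⁻¹ (-ω / q) using 1
    simp only [hahnEigenvalue, ddQ, inv_pow, Nat.add_sub_cancel]
    ring

theorem hahnEigenvalue_zero : hahnEigenvalue q a d 0 = 0 := by simp [hahnEigenvalue]

variable (hq : q ≠ 0) (hqr : ∀ n : ℕ, 0 < n → q ^ n = 1 → q = 1)
  (hd : ∀ n, ddQ q a d n ≠ 0)
include hq hqr hd

theorem hahnEigenvalue_ne_zero {n : ℕ} (hn : n ≠ 0) : hahnEigenvalue q a d n ≠ 0 :=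
  mul_ne_zero (mul_ne_zero (inv_ne_zero (pow_ne_zero n hq)) (qBracket_ne_zero hqr hn)) (hd _)

omit hqr hd in
theorem pow_mul_hahnEigenvalue_sub (m s : ℕ) :
    q ^ (m + s + 2) * (hahnEigenvalue q a d (m + s + 2) - hahnEigenvalue q a d (m + 1))
      = qBracket q (s + 1) * ddQ q a d (2 * m + s + 2) := by
  have r1 : qBracket q (m + s + 2) = qBracket q (s + 1) + q ^ (s + 1) * qBracket q (m + 1) := by
    rw [← qBracket_add]; ring_nf
  have r2 : ddQ q a d (m + s + 1) = q ^ (s + 1) * ddQ q a d m + a * qBracket q (s + 1) := by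
    rw [← ddQ_add]; ring_nf
  have r3 : ddQ q a d (2 * m + s + 2)
      = q ^ (m + 1) * ddQ q a d (m + s + 1) + a * qBracket q (m + 1) := by
    rw [← ddQ_add]; ring_nf
  have hpow : q ^ (m + s + 2) = q ^ (s + 1) * q ^ (m + 1) := by ring
  have hcancel : q ^ (m + s + 2) * ((q ^ (m + s + 2))⁻¹ * qBracket q (m + s + 2)
      * ddQ q a d (m + s + 1) - (q ^ (m + 1))⁻¹ * qBracket q (m + 1) * ddQ q a d m)
      = qBracket q (m + s + 2) * ddQ q a d (m + s + 1)
        - q ^ (s + 1) * (qBracket q (m + 1) * ddQ q a d m) := by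
    rw [hpow]
    field_simp
  simp only [hahnEigenvalue, show m + s + 2 - 1 = m + s + 1 by omega, Nat.add_sub_cancel, hcancel]
  rw [r1, r3, r2]
  linear_combination
    (qBracket q (s + 1) * q ^ (s + 1) * ddQ q a d m + a * qBracket q (s + 1) ^ 2) *
      qBracket_mul_sub_one (q := q) (m + 1)
    - (q ^ (s + 1) * qBracket q (m + 1) * ddQ q a d m
        + a * qBracket q (m + 1) * qBracket q (s + 1)) * qBracket_mul_sub_one (q := q) (s + 1)

theorem hahnEigenvalue_ne {m n : ℕ} (h : m < n) :
    hahnEigenvalue q a d m ≠ hahnEigenvalue q a d n := by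
  rcases m with _ | m
  · exact hahnEigenvalue_zero ▸ (hahnEigenvalue_ne_zero hq hqr hd (by omega)).symm
  obtain ⟨s, rfl⟩ : ∃ s, n = m + s + 2 := ⟨n - m - 2, by omega⟩
  intro heq
  have h' := pow_mul_hahnEigenvalue_sub hq (a := a) (d := d) m s
  rw [← heq, sub_self, mul_zero] at h'
  exact mul_ne_zero (qBracket_ne_zero hqr s.succ_ne_zero) (hd _) h'.symm

end EigenOperator

section Regularity

variable {q ω : ℂ} {D : ℂ[X] →ₗ[ℂ] ℂ[X]} {a b c d e : ℂ} {u : PDual}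

theorem IsPearson.iterate_shift_apply_one_ne_zero (hD : IsHahn q ω D) (hqω : q ≠ 1 ∨ ω ≠ 0)
    (hq : q ≠ 0) (hP : IsPearson q ω D (C a * X ^ 2 + C b * X + C c) (C d * X + C e) u)
    (hd : ∀ n, ddQ q a d n ≠ 0)
    (hφ : ∀ n, (C a * X ^ 2 + C b * X + C c).eval
      (-(eeQ q ω a b d e n) / ddQ q a d (2 * n)) ≠ 0)
    (hu1 : u 1 ≠ 0) (k : ℕ) : (pearsonShift q ω (C a * X ^ 2 + C b * X + C c))^[k] u 1 ≠ 0 := by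
  rw [← pearsonPsi_zero (q := q) (ω := ω) a b] at hP
  induction k with
  | zero => exact hu1
  | succ k ih =>
    have hm := (hP.iterate_shift hD hqω hq (hD.pearsonPsi_succ hqω a b c d e) k).moment hD hqω
    rw [Function.iterate_succ_apply', pearsonShift_apply, Lop_one, mul_one]
    intro h0
    rw [h0, mul_zero, eq_comm] at hm
    refine ih ((mul_eq_zero.mp hm).resolve_left (mul_ne_zero hq ?_))
    have hφk := hφ k
    simp only [eval_add, eval_mul, eval_C, eval_pow, eval_X] at hφk
    set E := eeQ q ω a b d e k
    set D₀ := ddQ q a d (2 * k)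
    have hD₀ : D₀ ≠ 0 := hd _
    have hquad : a * E ^ 2 - b * E * D₀ + c * D₀ ^ 2
        = D₀ ^ 2 * (a * (-E / D₀) ^ 2 + b * (-E / D₀) + c) := by
      field_simp
      ring
    rw [hquad]
    exact mul_ne_zero (pow_ne_zero 2 hD₀) hφk

theorem isRegularFunc_of_isPearson (hD : IsHahn q ω D) (hqω : q ≠ 1 ∨ ω ≠ 0) (hq : q ≠ 0)
    (hqr : ∀ n : ℕ, 0 < n → q ^ n = 1 → q = 1) (hu : u ≠ 0)
    (hP : IsPearson q ω D (C a * X ^ 2 + C b * X + C c) (C d * X + C e) u)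
    (hd : ∀ n, ddQ q a d n ≠ 0)
    (hφ : ∀ n, (C a * X ^ 2 + C b * X + C c).eval
      (-(eeQ q ω a b d e n) / ddQ q a d (2 * n)) ≠ 0) :
    IsRegularFunc u := by
  set φ := C a * X ^ 2 + C b * X + C c
  have hμ {m n : ℕ} (h : m ≠ n) : hahnEigenvalue q a d m ≠ hahnEigenvalue q a d n :=
    h.lt_or_gt.elim (hahnEigenvalue_ne hq hqr hd) fun h => (hahnEigenvalue_ne hq hqr hd h).symm
  choose R hR hRμ using exists_hasTopCoeff_eigenvector (hahnEigenOp q ω D φ (C d * X + C e))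
    (hahnEigenvalue q a d) (HasTopCoeff.hahnEigenOp hD hqω b c e) (hμ ·.ne)
  have hE n := (isHahnEigen_iff hq).mpr (hRμ n)
  have hLR : ∀ n, u (Lop q ω (R n)) = if n = 0 then u 1 else 0 := by
    intro n
    split_ifs with hn
    · subst hn
      rw [(hR 0).eq_C, Lop_C, C_1]
    · have h := hP.mul_apply_Lop_mul hD hqω (hE n) 1
      rwa [hD.map_one hqω, zero_mul, mul_zero, map_zero, neg_zero, one_mul, mul_eq_zero,
        or_iff_right (hahnEigenvalue_ne_zero hq hqr hd hn)] at h
  have hu1 : u 1 ≠ 0 := fun h1 => hu <| eq_zero_of_apply_hasTopCoeff_eq_zero u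
    (fun n => Lop q ω (R n)) (fun n => ⟨_, mul_ne_zero (pow_ne_zero n hq) one_ne_zero,
      (hR n).Lop q ω⟩) (by simp [hLR, h1])
  have hu1_iter := hP.iterate_shift_apply_one_ne_zero hD hqω hq hd hφ hu1
  have hscale m n : (q ^ m)⁻¹ • Lop q ω (R m) * (q ^ n)⁻¹ • Lop q ω (R n)
      = ((q ^ m)⁻¹ * (q ^ n)⁻¹) • Lop q ω (R m * R n) := by
    rw [Lop_mul, smul_mul_smul_comm]
  refine ⟨fun n => (q ^ n)⁻¹ • Lop q ω (R n), fun n => ?_, fun m n hmn => ?_, fun n => ?_⟩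
  · refine HasTopCoeff.monic ?_
    simpa [pow_ne_zero n hq] using ((hR n).Lop q ω).smul (q ^ n)⁻¹
  · rw [hscale, map_smul, hP.apply_Lop_mul_eq_zero hD hqω (hE m) (hE n) (hμ hmn), smul_zero]
  · rw [pow_two, hscale, map_smul, smul_eq_mul]
    refine mul_ne_zero (by simp [hq]) ?_
    rw [← pearsonPsi_zero (q := q) (ω := ω) a b] at hP hE
    exact hP.iterate_shift_apply_Lop_mul_self_ne_zero (k := 0) hD hqω hq hqr
      (hD.pearsonPsi_succ hqω a b c d e) (fun _ => hD.map_linear hqω _ _) hu1_iter n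
      one_ne_zero (hR n) (hE n)

end Regularity

theorem stmt_4_general (q ω : ℂ) (hq0 : q ≠ 0) (hqω : q ≠ 1 ∨ ω ≠ 0)
    (hqr : ∀ n : ℕ, 0 < n → q ^ n = 1 → q = 1)
    (a b c d e : ℂ) (φ ψ : Polynomial ℂ)
    (hφ : φ = C a * X ^ 2 + C b * X + C c) (hψ : ψ = C d * X + C e)
    (Dstar : Polynomial ℂ →ₗ[ℂ] Polynomial ℂ) (hDstar : IsHahn q⁻¹ (-ω / q) Dstar)
    (u : PDual) (hu : u ≠ 0)
    (heq : hahnDual q Dstar (pMul φ u) = pMul ψ u)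
    (hcond : ∀ n : ℕ, ddQ q a d n ≠ 0 ∧
      φ.eval (-(eeQ q ω a b d e n) / ddQ q a d (2 * n)) ≠ 0) :
    IsRegularFunc u := by
  subst hφ hψ
  exact isRegularFunc_of_isPearson (hDstar.of_inv hq0) hqω hq0 hqr hu
    (isPearson_of_hahnDual_eq heq) (fun n => (hcond n).1) (fun n => (hcond n).2)

theorem stmt_4 (q ω : ℂ) (hq0 : q ≠ 0) (hqω : q ≠ 1 ∨ ω ≠ 0)
    (hqr : ∀ n : ℕ, 0 < n → q ^ n = 1 → q = 1)
    (a b c d e : ℂ) (φ ψ : Polynomial ℂ)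
    (hφ : φ = C a * X ^ 2 + C b * X + C c) (hψ : ψ = C d * X + C e)
    (hne : φ ≠ 0 ∨ ψ ≠ 0)
    (Dstar : Polynomial ℂ →ₗ[ℂ] Polynomial ℂ) (hDstar : IsHahn q⁻¹ (-ω / q) Dstar)
    (u : PDual) (hu : u ≠ 0)
    (heq : hahnDual q Dstar (pMul φ u) = pMul ψ u)
    (hcond : ∀ n : ℕ, ddQ q a d n ≠ 0 ∧
      φ.eval (-(eeQ q ω a b d e n) / ddQ q a d (2 * n)) ≠ 0) :
    IsRegularFunc u :=
  stmt_4_general q ω hq0 hqω hqr a b c d e φ ψ hφ hψ Dstar hDstar u hu heq hcond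

end HahnOPSPaper
end
end
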